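/- The base group A_n = ⊕_ℤ(ℤ/pℤ)^n is a weakly maximal subgroup of L_n = (ℤ/pℤ)^n ≀ ℤ: it has infinite index, and every subgroup of L_n properly containing A_n has finite index in L_n. -/

import Mathlib

/-!
The base group `A_n` is the kernel of the projection `L_n → ℤ`. A subgroup `W` containing this
kernel has the same index as its image in `ℤ`, and `W ≠ A_n` makes that image a nonzero subgroup
`kℤ`, of index `|k|`. The same correspondence gives `A_n` itself the index of `⊥` in `ℤ`, which
is infinite.
-/

open Finsupp Multiplicative

/-- The base group of the lamplighter group `L_n = (ℤ/pℤ)^n ≀ ℤ`: `⊕_ℤ (ℤ/pℤ)^n`. -/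
abbrev LampBase (p n : ℕ) := ℤ →₀ (Fin n → ZMod p)

/-- The shift `x^s` on the base group. -/
def lampShift (p n : ℕ) (s : ℤ) : LampBase p n ≃+ LampBase p n :=
  Finsupp.domCongr (Equiv.addRight s)

/-- The shift action of `ℤ` on the (multiplicative) base group. -/
noncomputable def lampAct (p n : ℕ) :
    Multiplicative ℤ →* MulAut (Multiplicative (LampBase p n)) where
  toFun s := AddEquiv.toMultiplicative (lampShift p n s.toAdd)
  map_one' := by
    ext w
    simp [lampShift, Finsupp.domCongr_apply]
    rfl
  map_mul' s t := by
    ext w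
    simp [lampShift, Finsupp.domCongr_apply, MulAut.mul_def, MulEquiv.trans_apply]
    simp [Finsupp.equivMapDomain_apply, Equiv.Perm.mul_def]
    ring_nf

/-- The lamplighter group `L_n = (ℤ/pℤ)^n ≀ ℤ`, realized as the semidirect
product of the base group `⊕_ℤ (ℤ/pℤ)^n` with `ℤ` acting by the shift. -/
abbrev Lamp (p n : ℕ) :=
  SemidirectProduct (Multiplicative (LampBase p n)) (Multiplicative ℤ) (lampAct p n)

theorem Int.finiteIndex_of_ne_bot {H : AddSubgroup ℤ} (hH : H ≠ ⊥) : H.FiniteIndex := by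
  obtain ⟨a, ha, ha0⟩ := H.bot_or_exists_ne_zero.resolve_left hH
  have : (AddSubgroup.zmultiples a).FiniteIndex := ⟨by simpa [Int.index_zmultiples] using ha0⟩
  exact AddSubgroup.finiteIndex_of_le (AddSubgroup.zmultiples_le.mpr ha)

theorem Int.finiteIndex_of_ne_bot_multiplicative {H : Subgroup (Multiplicative ℤ)} (hH : H ≠ ⊥) :
    H.FiniteIndex := by
  rw [← AddSubgroup.toSubgroup.apply_symm_apply H, AddSubgroup.finiteIndex_toSubgroup_iff]
  exact Int.finiteIndex_of_ne_bot (by simpa using hH)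

namespace MonoidHom

variable {G G' : Type*} [Group G] [Group G']

theorem index_ker_eq_zero_of_surjective [Infinite G'] {f : G →* G'}
    (hf : Function.Surjective f) : f.ker.index = 0 := by
  rw [Subgroup.index_ker, f.range_eq_top_of_surjective hf, Subgroup.card_top]
  exact Nat.card_eq_zero_of_infinite

theorem finiteIndex_of_ker_lt {f : G →* Multiplicative ℤ} (hf : Function.Surjective f)
    {W : Subgroup G} (hW : f.ker < W) : W.FiniteIndex := by
  have hmap : W.map f ≠ ⊥ := fun h => hW.not_ge ((Subgroup.map_eq_bot_iff _).mp h)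
  have := Int.finiteIndex_of_ne_bot_multiplicative hmap
  exact ⟨Subgroup.index_map_eq W hf hW.le ▸ Subgroup.FiniteIndex.index_ne_zero⟩

end MonoidHom

theorem stmt_18_general (p n : ℕ) :
    (SemidirectProduct.inl (φ := lampAct p n)).range.index = 0 ∧
      ∀ W : Subgroup (Lamp p n),
        (SemidirectProduct.inl (φ := lampAct p n)).range < W → W.FiniteIndex := by
  rw [SemidirectProduct.range_inl_eq_ker_rightHom]
  exact ⟨MonoidHom.index_ker_eq_zero_of_surjective SemidirectProduct.rightHom_surjective,
    fun _ => MonoidHom.finiteIndex_of_ker_lt SemidirectProduct.rightHom_surjective⟩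

/-- The base group `A_n` is weakly maximal in `L_n`: it has infinite index,
and every subgroup properly containing it has finite index. -/
theorem stmt_18 (p n : ℕ) [Fact p.Prime] (hn : 1 ≤ n) :
    (SemidirectProduct.inl (φ := lampAct p n)).range.index = 0 ∧
      ∀ W : Subgroup (Lamp p n),
        (SemidirectProduct.inl (φ := lampAct p n)).range < W → W.FiniteIndex :=
  stmt_18_general p n
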